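/- If a word w has period p and |v| ≥ p for some factor occurrence v^p inside w with |v| ≥ 1, then w has period gcd(p, |v|). More precisely: if w contains a factor v^p (p copies of a nonempty word v) and w has period p, then w has period gcd(p, |v|). -/

import Mathlib

/-- A word `w` has period `p` if letters at distance `p` coincide. -/
def HasPeriod {α : Type*} (w : List α) (p : ℕ) : Prop :=
  ∀ i, i + p < w.length → w[i]? = w[i + p]?

/-- `npow n v` is the `n`-fold repetition `v^n`. -/
def npow {α : Type*} (n : ℕ) (v : List α) : List α :=
  (List.replicate n v).flatten

/-!
The factor `v^p` has periods `p` and `|v|` and length `p * |v| ≥ lcm p |v|`. Moving by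
multiples of `p`, any two positions of `w` that are congruent modulo `gcd p |v|` land in the
first `p` letters of the factor; there the Chinese remainder theorem for non-coprime moduli
gives a position below `lcm p |v|` congruent to the first modulo `p` and to the second
modulo `|v|`, which links the two letters.
-/

section

variable {α : Type*}

theorem length_npow (n : ℕ) (v : List α) : (npow n v).length = n * v.length := by
  simp [npow]

theorem npow_succ (n : ℕ) (v : List α) : npow (n + 1) v = v ++ npow n v := by
  simp [npow, List.replicate_succ]

theorem getElem?_npow {n j : ℕ} {v : List α} (hj : j < n * v.length) :
    (npow n v)[j]? = v[j % v.length]? := by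
  induction n generalizing j with
  | zero => simp at hj
  | succ n ih =>
    rw [npow_succ]
    rcases lt_or_ge j v.length with hjv | hjv
    · rw [List.getElem?_append_left hjv, Nat.mod_eq_of_lt hjv]
    · rw [List.getElem?_append_right hjv, ih (by rw [Nat.succ_mul] at hj; omega),
        Nat.mod_eq_sub_mod hjv]

theorem hasPeriod_npow (n : ℕ) (v : List α) : HasPeriod (npow n v) v.length := by
  intro i hi
  rw [length_npow] at hi
  rw [getElem?_npow (by omega), getElem?_npow hi, Nat.add_mod_right]

namespace HasPeriod

variable {w : List α} {p : ℕ}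

theorem getElem?_add_mul (hper : HasPeriod w p) {i t : ℕ} (hi : i + p * t < w.length) :
    w[i]? = w[i + p * t]? := by
  induction t with
  | zero => simp
  | succ t ih =>
    rw [ih (by rw [Nat.mul_succ] at hi; omega), hper _ (by rw [Nat.mul_succ] at hi; omega),
      Nat.mul_succ, Nat.add_assoc]

theorem getElem?_eq_of_modEq (hper : HasPeriod w p) {i j : ℕ} (hij : i ≡ j [MOD p])
    (hi : i < w.length) (hj : j < w.length) : w[i]? = w[j]? := by
  wlog hle : i ≤ j generalizing i j
  · exact (this hij.symm hj hi (by omega)).symm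
  obtain ⟨t, ht⟩ := (Nat.modEq_iff_dvd' hle).mp hij
  rw [show j = i + p * t by omega]
  exact hper.getElem?_add_mul (by omega)

theorem of_forall_modEq
    (h : ∀ i j, i < w.length → j < w.length → i ≡ j [MOD p] → w[i]? = w[j]?) :
    HasPeriod w p :=
  fun i hi => h i (i + p) (by omega) hi (Nat.add_mod_right i p).symm

end HasPeriod

theorem Nat.exists_lt_add_modEq {p : ℕ} (hp : 0 < p) (s i : ℕ) :
    ∃ a < p, s + a ≡ i [MOD p] := by
  have := NeZero.of_pos hp
  refine ⟨((i : ZMod p) - s).val, ZMod.val_lt _, ?_⟩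
  rw [← ZMod.natCast_eq_natCast_iff]
  push_cast
  rw [ZMod.natCast_zmod_val]
  ring

theorem HasPeriod.gcd_of_factor {w x u y : List α} {p q : ℕ} (hp : 0 < p) (hq : 0 < q)
    (hw : w = x ++ u ++ y) (hperw : HasPeriod w p) (hperu : HasPeriod u q)
    (hlen : Nat.lcm p q ≤ u.length) : HasPeriod w (Nat.gcd p q) := by
  have hpl : p ≤ Nat.lcm p q := Nat.le_of_dvd (Nat.lcm_pos hp hq) (Nat.dvd_lcm_left p q)
  have hwin : ∀ a < u.length, w[x.length + a]? = u[a]? := fun a ha => by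
    rw [hw, List.append_assoc, List.getElem?_append_right (by omega), Nat.add_sub_cancel_left,
      List.getElem?_append_left ha]
  have hwlen : x.length + u.length ≤ w.length := by simp [hw]
  refine HasPeriod.of_forall_modEq fun i j hi hj hij => ?_
  obtain ⟨a, hap, hai⟩ := Nat.exists_lt_add_modEq hp x.length i
  obtain ⟨b, hbp, hbj⟩ := Nat.exists_lt_add_modEq hp x.length j
  have hab : a ≡ b [MOD Nat.gcd p q] := by
    have hdvd := Nat.gcd_dvd_left p q
    exact Nat.ModEq.add_left_cancel' x.length
      ((hai.of_dvd hdvd).trans (hij.trans (hbj.of_dvd hdvd).symm))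
  set t := Nat.chineseRemainder' hab
  have htl : (t : ℕ) < Nat.lcm p q := Nat.chineseRemainder'_lt_lcm hab hp.ne' hq.ne'
  calc w[i]? = w[x.length + a]? := hperw.getElem?_eq_of_modEq hai.symm hi (by omega)
    _ = w[x.length + t]? :=
        hperw.getElem?_eq_of_modEq (t.2.1.symm.add_left _) (by omega) (by omega)
    _ = u[b]? := by
        rw [hwin _ (by omega)]
        exact hperu.getElem?_eq_of_modEq t.2.2 (by omega) (by omega)
    _ = w[j]? := by
        rw [← hwin _ (by omega)]
        exact hperw.getElem?_eq_of_modEq hbj (by omega) hj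

end

/-- If a word `w` has period `p` and contains a factor `v^p` (p copies of a
nonempty word `v`), then `w` has period `gcd(p, |v|)`. -/
theorem period_of_iterated_factor {α : Type*} (w x v y : List α) (p : ℕ)
    (hp : 1 ≤ p) (hv : v ≠ [])
    (hw : w = x ++ npow p v ++ y) (hper : HasPeriod w p) :
    HasPeriod w (Nat.gcd p v.length) := by
  have hq : 0 < v.length := List.length_pos_iff.mpr hv
  refine hper.gcd_of_factor hp hq hw (hasPeriod_npow p v) ?_
  rw [length_npow]
  exact Nat.le_of_dvd (Nat.mul_pos hp hq) (Nat.lcm_dvd_mul p v.length)
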